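/- Let M be a monoid and c ∈ M. Then M' = {x ∈ M : cx ∈ Mc} is a submonoid of M, and the map M' → M_c sending x to cx is a surjective monoid homomorphism from M' onto the local divisor M_c = (cM ∩ Mc, ∘, c). In particular, M_c is a divisor (a homomorphic image of a submonoid) of M. -/

import Mathlib

variable {M : Type*} [Monoid M]

/-- The underlying set `cM ∩ Mc` of the local divisor of `M` at `c`. -/
def LD (M : Type*) [Monoid M] (c : M) : Set M :=
  {z | (∃ y, z = c * y) ∧ (∃ x, z = x * c)}

namespace LD

variable {c : M}

/-- The multiplication `(xc) ∘ (cy) = xcy` of the local divisor at `c`,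
defined via a choice of `x` with `z₁ = x * c`. -/
noncomputable def mul (z₁ z₂ : LD M c) : LD M c := by
  refine ⟨z₁.2.2.choose * (z₂ : M), ?_, ?_⟩
  · obtain ⟨y₁, hy₁⟩ := z₁.2.1
    obtain ⟨y₂, hy₂⟩ := z₂.2.1
    refine ⟨y₁ * y₂, ?_⟩
    calc z₁.2.2.choose * (z₂ : M) = z₁.2.2.choose * (c * y₂) := by rw [← hy₂]
      _ = z₁.2.2.choose * c * y₂ := (mul_assoc _ _ _).symm
      _ = (z₁ : M) * y₂ := by rw [← z₁.2.2.choose_spec]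
      _ = c * y₁ * y₂ := by rw [hy₁]
      _ = c * (y₁ * y₂) := mul_assoc _ _ _
  · obtain ⟨x₂, hx₂⟩ := z₂.2.2
    exact ⟨z₁.2.2.choose * x₂, by rw [hx₂, mul_assoc]⟩

noncomputable instance : Mul (LD M c) := ⟨mul⟩

instance : One (LD M c) := ⟨⟨c, ⟨1, (mul_one c).symm⟩, ⟨1, (one_mul c).symm⟩⟩⟩

@[simp] theorem one_val : ((1 : LD M c) : M) = c := rfl

/-- The multiplication of the local divisor is well defined:
if `z₁ = x * c` then `z₁ ∘ z₂ = x * z₂`. -/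
theorem mul_val (z₁ z₂ : LD M c) (x : M) (hx : (z₁ : M) = x * c) :
    ((z₁ * z₂ : LD M c) : M) = x * (z₂ : M) := by
  show z₁.2.2.choose * (z₂ : M) = x * (z₂ : M)
  obtain ⟨y₂, hy₂⟩ := z₂.2.1
  calc z₁.2.2.choose * (z₂ : M) = z₁.2.2.choose * (c * y₂) := by rw [← hy₂]
    _ = z₁.2.2.choose * c * y₂ := (mul_assoc _ _ _).symm
    _ = x * c * y₂ := by rw [← z₁.2.2.choose_spec, hx]
    _ = x * (c * y₂) := mul_assoc _ _ _
    _ = x * (z₂ : M) := by rw [← hy₂]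

/-- The local divisor `M_c = (cM ∩ Mc, ∘, c)` of the monoid `M` at `c`. -/
noncomputable instance monoid : Monoid (LD M c) where
  mul_assoc a b d := by
    obtain ⟨xa, hxa⟩ := a.2.2
    have hab : ((a * b : LD M c) : M) = xa * (b : M) := mul_val a b xa hxa
    obtain ⟨xb, hxb⟩ := b.2.2
    have hab' : ((a * b : LD M c) : M) = (xa * xb) * c := by rw [hab, hxb, mul_assoc]
    apply Subtype.ext
    rw [mul_val (a * b) d (xa * xb) hab', mul_val a (b * d) xa hxa,
      mul_val b d xb hxb, mul_assoc]
  one_mul a := Subtype.ext <| by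
    rw [mul_val 1 a 1 (one_mul c).symm, one_mul]
  mul_one a := Subtype.ext <| by
    obtain ⟨xa, hxa⟩ := a.2.2
    rw [mul_val a 1 xa hxa, one_val, ← hxa]

end LD

/-- The submonoid `M' = {x ∈ M : cx ∈ Mc}` of `M`. -/
def LDdom (M : Type*) [Monoid M] (c : M) : Submonoid M where
  carrier := {x | ∃ y, c * x = y * c}
  one_mem' := ⟨1, by rw [mul_one, one_mul]⟩
  mul_mem' := by
    rintro a b ⟨ya, hya⟩ ⟨yb, hyb⟩
    exact ⟨ya * yb, by rw [← mul_assoc, hya, mul_assoc, hyb, ← mul_assoc]⟩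

namespace LDdom

variable {c : M}

theorem mul_mem_LD (x : LDdom M c) : c * (x : M) ∈ LD M c :=
  ⟨⟨x, rfl⟩, x.2⟩

variable (c) in
noncomputable def toLD : LDdom M c →* LD M c where
  toFun x := ⟨c * x, mul_mem_LD x⟩
  map_one' := Subtype.ext (mul_one c)
  map_mul' a b := by
    obtain ⟨ya, hya⟩ := a.2
    apply Subtype.ext
    change c * (a * b : M) = ((⟨c * a, mul_mem_LD a⟩ * ⟨c * b, mul_mem_LD b⟩ : LD M c) : M)
    rw [LD.mul_val _ _ ya hya]
    calc c * (a * b : M) = ya * c * b := by rw [← mul_assoc, hya]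
      _ = ya * (c * b) := mul_assoc _ _ _

@[simp] theorem coe_toLD (x : LDdom M c) : (toLD c x : M) = c * x := rfl

theorem toLD_surjective : Function.Surjective (toLD c) := by
  rintro ⟨z, ⟨y, rfl⟩, ⟨x, hx⟩⟩
  exact ⟨⟨y, x, hx⟩, rfl⟩

end LDdom

/-- `M' = {x ∈ M : cx ∈ Mc}` is a submonoid of `M` (witnessed by the submonoid `LDdom M c`),
and `x ↦ cx` is a surjective monoid homomorphism from `M'` onto the local divisor
`M_c = (cM ∩ Mc, ∘, c)`.  In particular `M_c` is a divisor of `M`. -/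
theorem localDivisor_divides (c : M) :
    ((1 : M) ∈ {x : M | ∃ y, c * x = y * c}) ∧
    (∀ a b : M, a ∈ {x : M | ∃ y, c * x = y * c} → b ∈ {x : M | ∃ y, c * x = y * c} →
      a * b ∈ {x : M | ∃ y, c * x = y * c}) ∧
    ∃ f : LDdom M c →* LD M c,
      (∀ x : LDdom M c, ((f x : LD M c) : M) = c * (x : M)) ∧ Function.Surjective f :=
  ⟨(LDdom M c).one_mem, fun _ _ => (LDdom M c).mul_mem,
    LDdom.toLD c, LDdom.coe_toLD, LDdom.toLD_surjective⟩
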